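/- For g(t) = ∫₀¹ e^{−tx} dx and D_k(t) = det(g^{(i+j−2)}(t))_{1≤i,j≤k}, the Toda-type identity D_{k−1}(t)·D_{k+1}(t)/D_k(t)² = (log D_k(t))'' holds wherever D_k(t) ≠ 0, i.e. D_{k−1}·D_{k+1} = D_k·D_k'' − (D_k')². -/

import Mathlib

open MeasureTheory intervalIntegral

noncomputable def gFun : ℝ → ℝ := fun t => ∫ x in (0:ℝ)..1, Real.exp (-(t * x))

noncomputable def Dk (k : ℕ) : ℝ → ℝ := fun t =>
  Matrix.det (Matrix.of fun i j : Fin k => iteratedDeriv ((i : ℕ) + (j : ℕ)) gFun t)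

/-!
Let `M = (f^{(i+j)}(t))_{0 ≤ i,j ≤ k+1}`. Deleting its last row and column leaves `D_{k+1}`, and
deleting its last two rows and columns leaves `D_k`. A determinant whose columns are successive
derivatives of its first column has as derivative the determinant with the last column differentiated
once more; hence `D_{k+1}'` and `D_{k+1}''` are the remaining cofactors of `M` in its last two rows
and columns (up to sign and transposition). The Desnanot–Jacobi identity for these two rows and
columns is therefore `D_k D_{k+2} = D_{k+1} D_{k+1}'' - (D_{k+1}')²`.
-/

open Matrix
open scoped ContDiff

namespace Matrix

variable {R : Type*} [CommRing R]

section Blocks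

variable {m n : Type*} [Fintype m] [Fintype n] [DecidableEq m] [DecidableEq n]

theorem det_mul_det_adjugate_toBlocks₂₂ (M : Matrix (m ⊕ n) (m ⊕ n) R) :
    det M * det M.adjugate.toBlocks₂₂ = det M ^ Fintype.card n * det M.toBlocks₁₁ := by
  set A := M.adjugate
  set d := det M
  have hMA : M * A = fromBlocks (d • 1) 0 0 (d • 1) := by
    rw [mul_adjugate, ← fromBlocks_one, fromBlocks_smul, smul_zero, smul_zero]
  rw [← fromBlocks_toBlocks M, ← fromBlocks_toBlocks A, fromBlocks_multiply] at hMA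
  obtain ⟨-, hB, -, hD⟩ := fromBlocks_inj.mp hMA
  have hMC : M * fromBlocks 1 A.toBlocks₁₂ 0 A.toBlocks₂₂ =
      fromBlocks M.toBlocks₁₁ 0 M.toBlocks₂₁ (d • 1) := by
    conv_lhs => rw [← fromBlocks_toBlocks M]
    rw [fromBlocks_multiply, hB, hD]
    simp
  have := congrArg det hMC
  rwa [det_mul, det_fromBlocks_zero₂₁, det_fromBlocks_zero₁₂, det_one, one_mul, det_smul, det_one,
    mul_one, mul_comm (det M.toBlocks₁₁)] at this

/-- Jacobi's complementary minor theorem. The factor `det M` is cancelled for the generic matrix,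
whose determinant is a nonzero polynomial. -/
theorem det_adjugate_toBlocks₂₂ [Nonempty n] (M : Matrix (m ⊕ n) (m ⊕ n) R) :
    det M.adjugate.toBlocks₂₂ = det M ^ (Fintype.card n - 1) * det M.toBlocks₁₁ := by
  let X := mvPolynomialX (m ⊕ n) (m ⊕ n) ℤ
  have hX : det X.adjugate.toBlocks₂₂ = det X ^ (Fintype.card n - 1) * det X.toBlocks₁₁ := by
    apply mul_left_cancel₀ (det_mvPolynomialX_ne_zero (m ⊕ n) ℤ)
    rw [det_mul_det_adjugate_toBlocks₂₂, ← mul_assoc, ← pow_succ',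
      Nat.sub_add_cancel Fintype.card_pos]
  let φ := MvPolynomial.aeval (R := ℤ) fun p : (m ⊕ n) × (m ⊕ n) => M p.1 p.2
  have hM : φ.mapMatrix X = M := mvPolynomialX_mapMatrix_aeval ℤ M
  have := congrArg φ hX
  rw [map_mul, map_pow, AlgHom.map_det, AlgHom.map_det, AlgHom.map_det] at this
  rwa [← hM, ← AlgHom.map_adjugate]

end Blocks

/-- The Desnanot–Jacobi (Lewis Carroll) identity for the last two rows and columns. -/
theorem det_mul_det_submatrix_castSucc_castSucc {k : ℕ} (M : Matrix (Fin (k + 2)) (Fin (k + 2)) R) :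
    det M * det (M.submatrix (Fin.castSucc ∘ Fin.castSucc) (Fin.castSucc ∘ Fin.castSucc)) =
      M.adjugate (Fin.last k).castSucc (Fin.last k).castSucc * M.adjugate (Fin.last _) (Fin.last _) -
        M.adjugate (Fin.last k).castSucc (Fin.last _) *
          M.adjugate (Fin.last _) (Fin.last k).castSucc := by
  let e : Fin k ⊕ Fin 2 ≃ Fin (k + 2) := finSumFinEquiv
  have h := det_adjugate_toBlocks₂₂ (M.submatrix e e)
  have hinl : e ∘ Sum.inl = Fin.castSucc ∘ Fin.castSucc := by
    ext i
    simp [e]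
  have h0 : e (Sum.inr 0) = (Fin.last k).castSucc := by ext; simp [e]
  have h1 : e (Sum.inr 1) = Fin.last (k + 1) := by ext; simp [e]
  rw [adjugate_submatrix_equiv_self, det_fin_two, det_submatrix_equiv_self] at h
  simp only [toBlocks₂₂, toBlocks₁₁, of_apply, submatrix_apply, h0, h1] at h
  rw [h, Fintype.card_fin, pow_one, ← hinl]
  rfl

end Matrix

section DetDeriv

variable {𝕜 : Type*} [NontriviallyNormedField 𝕜]

theorem hasDerivAt_det {n : Type*} [Fintype n] [DecidableEq n] {A : 𝕜 → Matrix n n 𝕜}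
    {A' : Matrix n n 𝕜} {t : 𝕜} (h : ∀ i j, HasDerivAt (fun s => A s i j) (A' i j) t) :
    HasDerivAt (fun s => det (A s)) (∑ j, det ((A t).updateCol j fun i => A' i j)) t := by
  simp only [det_apply']
  have hterm (σ : Equiv.Perm n) := (HasDerivAt.fun_finsetProd (u := Finset.univ)
    fun j _ => h (σ j) j).const_mul (Equiv.Perm.sign σ : 𝕜)
  refine (HasDerivAt.fun_sum fun σ _ => hterm σ).congr_deriv ?_
  rw [Finset.sum_comm]
  refine Finset.sum_congr rfl fun σ _ => ?_
  rw [Finset.mul_sum]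
  refine Finset.sum_congr rfl fun j _ => ?_
  rw [← Finset.mul_prod_erase Finset.univ _ (Finset.mem_univ j), updateCol_self, smul_eq_mul]
  have : ∏ i ∈ Finset.univ.erase j, (A t).updateCol j (fun i => A' i j) (σ i) i =
      ∏ i ∈ Finset.univ.erase j, A t (σ i) i :=
    Finset.prod_congr rfl fun i hi => updateCol_ne (Finset.ne_of_mem_erase hi)
  rw [this]
  ring

/-- The indices `(Fin.last k).castSucc.succAbove j` run through `0, …, k - 1, k + 1`. Differentiating
any column but the last one produces a copy of the next column. -/
theorem hasDerivAt_det_wronskian {k : ℕ} {v : ℕ → 𝕜 → Fin (k + 1) → 𝕜} {t : 𝕜}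
    (hv : ∀ m i, HasDerivAt (fun s => v m s i) (v (m + 1) t i) t) :
    HasDerivAt (fun s => det (of fun i j : Fin (k + 1) => v j s i))
      (det (of fun i j => v ((Fin.last k).castSucc.succAbove j) t i)) t := by
  refine (hasDerivAt_det (A := fun s => of fun i j : Fin (k + 1) => v j s i)
    (A' := of fun i j : Fin (k + 1) => v (j + 1) t i) fun i j => hv j i).congr_deriv ?_
  rw [Fintype.sum_eq_single (Fin.last k)]
  · congr 1
    ext i j
    rcases Fin.eq_castSucc_or_eq_last j with ⟨j, rfl⟩ | rfl
    · simp [Fin.succAbove_castSucc_of_lt _ _ (Fin.castSucc_lt_last j),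
        (Fin.castSucc_lt_last j).ne]
    · simp
  · intro j hj
    obtain ⟨j, rfl⟩ := Fin.exists_castSucc_eq.mpr hj
    refine det_zero_of_column_eq (Fin.castSucc_lt_succ (i := j)).ne fun i => ?_
    simp [(Fin.castSucc_lt_succ (i := j)).ne']

noncomputable def iteratedDerivHankelDet (f : 𝕜 → 𝕜) (k : ℕ) (t : 𝕜) : 𝕜 :=
  det (of fun i j : Fin k => iteratedDeriv (i + j) f t)

variable {f : 𝕜 → 𝕜} {k : ℕ}

theorem hasDerivAt_det_iteratedDeriv (hf : ContDiff 𝕜 ∞ f) (ρ : Fin (k + 1) → ℕ) (t : 𝕜) :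
    HasDerivAt (fun s => det (of fun i j : Fin (k + 1) => iteratedDeriv (ρ i + j) f s))
      (det (of fun i j => iteratedDeriv (ρ i + (Fin.last k).castSucc.succAbove j) f t)) t :=
  hasDerivAt_det_wronskian (v := fun m s i => iteratedDeriv (ρ i + m) f s) fun m i => by
    rw [← add_assoc, iteratedDeriv_succ]
    exact (hf.differentiable_iteratedDeriv _ (mod_cast ENat.natCast_lt_top _)).differentiableAt
      |>.hasDerivAt

theorem deriv_iteratedDerivHankelDet (hf : ContDiff 𝕜 ∞ f) :
    deriv (iteratedDerivHankelDet f (k + 1)) = fun t =>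
      det (of fun i j : Fin (k + 1) => iteratedDeriv ((Fin.last k).castSucc.succAbove i + j) f t) := by
  funext t
  refine (hasDerivAt_det_iteratedDeriv hf (fun i => i) t).deriv.trans ?_
  rw [← det_transpose]
  congr 1
  ext i j
  simp [add_comm]

theorem deriv_deriv_iteratedDerivHankelDet (hf : ContDiff 𝕜 ∞ f) (t : 𝕜) :
    deriv (deriv (iteratedDerivHankelDet f (k + 1))) t =
      det (of fun i j : Fin (k + 1) => iteratedDeriv
        ((Fin.last k).castSucc.succAbove i + (Fin.last k).castSucc.succAbove j) f t) := by
  rw [deriv_iteratedDerivHankelDet hf, (hasDerivAt_det_iteratedDeriv hf _ t).deriv]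

theorem iteratedDerivHankelDet_toda (hf : ContDiff 𝕜 ∞ f) (t : 𝕜) :
    iteratedDerivHankelDet f k t * iteratedDerivHankelDet f (k + 2) t =
      iteratedDerivHankelDet f (k + 1) t * deriv (deriv (iteratedDerivHankelDet f (k + 1))) t -
        deriv (iteratedDerivHankelDet f (k + 1)) t ^ 2 := by
  set M : Matrix (Fin (k + 2)) (Fin (k + 2)) 𝕜 := of fun i j => iteratedDeriv (i + j) f t
  have jac := det_mul_det_submatrix_castSucc_castSucc M
  simp only [adjugate_fin_succ_eq_det_submatrix, Fin.succAbove_last, Fin.val_last,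
    Fin.val_castSucc] at jac
  rw [Even.neg_one_pow ⟨k, rfl⟩, Even.neg_one_pow ⟨k + 1, rfl⟩, Odd.neg_one_pow ⟨k, by ring⟩,
    Odd.neg_one_pow ⟨k, by ring⟩] at jac
  have hsymm : Mᵀ = M := by
    ext i j
    simp [M, add_comm]
  rw [← det_transpose (M.submatrix Fin.castSucc (Fin.last k).castSucc.succAbove),
    transpose_submatrix, hsymm] at jac
  rw [deriv_deriv_iteratedDerivHankelDet hf, deriv_iteratedDerivHankelDet hf]
  linear_combination (norm := ring1!) jac

end DetDeriv

section Moments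

open Real

theorem hasDerivAt_integral_neg_pow_mul_exp (m : ℕ) (t : ℝ) :
    HasDerivAt (fun s => ∫ x in (0:ℝ)..1, (-x) ^ m * exp (-(s * x)))
      (∫ x in (0:ℝ)..1, (-x) ^ (m + 1) * exp (-(t * x))) t := by
  have hbound : ∀ x ∈ Set.uIoc (0:ℝ) 1, ∀ s ∈ Metric.ball t 1,
      ‖(-x) ^ (m + 1) * exp (-(s * x))‖ ≤ exp (|t| + 1) := by
    intro x hx s hs
    rw [Set.uIoc_of_le zero_le_one] at hx
    have hs' : |s| < |t| + 1 := by
      have := abs_sub_abs_le_abs_sub s t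
      rw [Metric.mem_ball, Real.dist_eq] at hs
      linarith
    rw [norm_mul, norm_pow, norm_neg, Real.norm_of_nonneg hx.1.le,
      Real.norm_of_nonneg (exp_nonneg _)]
    calc x ^ (m + 1) * exp (-(s * x)) ≤ 1 * exp (|t| + 1) := by
          gcongr
          · exact pow_le_one₀ hx.1.le hx.2
          · nlinarith [mul_nonneg (by linarith [neg_abs_le s] : 0 ≤ |s| + s) hx.1.le,
              mul_nonneg (abs_nonneg s) (sub_nonneg.2 hx.2)]
      _ = exp (|t| + 1) := one_mul _
  have hderiv : ∀ x s, HasDerivAt (fun s => (-x) ^ m * exp (-(s * x)))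
      ((-x) ^ (m + 1) * exp (-(s * x))) s := fun x s => by
    refine (((hasDerivAt_mul_const x).fun_neg.exp).const_mul ((-x) ^ m)).congr_deriv ?_
    ring
  exact (hasDerivAt_integral_of_dominated_loc_of_deriv_le (Metric.ball_mem_nhds t one_pos)
    (.of_forall fun s => (by fun_prop : Continuous _).aestronglyMeasurable)
    ((by fun_prop : Continuous _).intervalIntegrable _ _)
    (by fun_prop : Continuous _).aestronglyMeasurable (.of_forall hbound) intervalIntegrable_const
    (.of_forall fun x _ s _ => hderiv x s)).2

theorem iteratedDeriv_gFun (m : ℕ) :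
    iteratedDeriv m gFun = fun t => ∫ x in (0:ℝ)..1, (-x) ^ m * exp (-(t * x)) := by
  induction m with
  | zero => funext t; simp [gFun]
  | succ m ih =>
    rw [iteratedDeriv_succ, ih]
    exact funext fun t => (hasDerivAt_integral_neg_pow_mul_exp m t).deriv

theorem contDiff_gFun : ContDiff ℝ ∞ gFun :=
  contDiff_of_differentiable_iteratedDeriv fun m _ t => by
    rw [iteratedDeriv_gFun]
    exact (hasDerivAt_integral_neg_pow_mul_exp m t).differentiableAt

end Moments

/-- The Toda-type identity `D_{k-1} D_{k+1} = D_k D_k'' - (D_k')²` for `k ≥ 1`. -/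
theorem toda_identity (k : ℕ) (t : ℝ) :
    Dk k t * Dk (k + 2) t =
      Dk (k + 1) t * deriv (deriv (Dk (k + 1))) t - (deriv (Dk (k + 1)) t) ^ 2 :=
  iteratedDerivHankelDet_toda contDiff_gFun t
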